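/- Let A = {−1,1}. For every integer r ≥ 2, s_A(C_3^r) = g_A(C_3^r). -/
import Mathlib


/-- A multiset `S` over an additive abelian group `G` has an `A`-zero-sum subsequence
of length `k`, for the weight set `A = {-1, 1}`: there is a sub-multiset of `S` of
cardinality `k` that splits as `t₁ + t₂` with `t₁.sum - t₂.sum = 0` (the elements of
`t₁` receive the weight `+1` and those of `t₂` the weight `-1`). -/
def HasWZSS {G : Type*} [AddCommGroup G] (S : Multiset G) (k : ℕ) : Prop :=
  ∃ t₁ t₂ : Multiset G, t₁ + t₂ ≤ S ∧ Multiset.card (t₁ + t₂) = k ∧ t₁.sum = t₂.sum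

/-- `sA G` is the smallest `ℓ` such that every sequence over `G` of length at least `ℓ`
has an `{-1,1}`-zero-sum subsequence of length `exp G`. -/
noncomputable def sA (G : Type*) [AddCommGroup G] : ℕ :=
  sInf {ℓ : ℕ | ∀ S : Multiset G, ℓ ≤ Multiset.card S →
    HasWZSS S (AddMonoid.exponent G)}

/-- `etaA G` is the smallest `ℓ` such that every sequence over `G` of length at least `ℓ`
has a nonempty `{-1,1}`-zero-sum subsequence of length at most `exp G`. -/
noncomputable def etaA (G : Type*) [AddCommGroup G] : ℕ :=
  sInf {ℓ : ℕ | ∀ S : Multiset G, ℓ ≤ Multiset.card S →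
    ∃ k, 1 ≤ k ∧ k ≤ AddMonoid.exponent G ∧ HasWZSS S k}

/-- `gA G` is the smallest `ℓ` such that every sequence over `G` of length at least `ℓ`
consisting of pairwise distinct elements has an `{-1,1}`-zero-sum subsequence of
length `exp G`. -/
noncomputable def gA (G : Type*) [AddCommGroup G] : ℕ :=
  sInf {ℓ : ℕ | ∀ S : Multiset G, ℓ ≤ Multiset.card S → S.Nodup →
    HasWZSS S (AddMonoid.exponent G)}

set_option linter.unusedSectionVars false

namespace WZSSAux
variable {G : Type*} [AddCommGroup G] [DecidableEq G]

def P3 (a b c : G) : Prop := a + b + c = 0 ∨ a + b = c ∨ b + c = a ∨ c + a = b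

def Good (S : Multiset G) : Prop := ∃ a b c : G, ({a, b, c} : Multiset G) ≤ S ∧ P3 a b c

omit [DecidableEq G] in
lemma P3_swap12 {a b c : G} (h : P3 a b c) : P3 b a c := by
  unfold P3 at *
  rcases h with h | h | h | h
  · left; rw [← h]; abel
  · right; left; rw [← h]; abel
  · right; right; right; rw [← h]; abel
  · right; right; left; rw [← h]; abel

omit [DecidableEq G] in
lemma P3_swap23 {a b c : G} (h : P3 a b c) : P3 a c b := by
  unfold P3 at *
  rcases h with h | h | h | h
  · left; rw [← h]; abel
  · right; right; right; rw [← h]; abel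
  · right; right; left; rw [← h]; abel
  · right; left; rw [← h]; abel

omit [DecidableEq G] in
lemma P3_neg_left {a b c : G} (h : P3 (-a) b c) : P3 a b c := by
  unfold P3 at *
  rcases h with h | h | h | h
  · right; right; left; linear_combination (norm := abel_nf) h
  · right; right; right; linear_combination (norm := abel_nf) -h
  · left; linear_combination (norm := abel_nf) h
  · right; left; linear_combination (norm := abel_nf) -h

omit [DecidableEq G] in
lemma P3_neg_mid {a b c : G} (h : P3 a (-b) c) : P3 a b c :=
  P3_swap12 (P3_neg_left (P3_swap12 h))

omit [DecidableEq G] in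
lemma good_mono {S T : Multiset G} (hST : S ≤ T) (h : Good S) : Good T := by
  obtain ⟨a, b, c, h1, h2⟩ := h
  exact ⟨a, b, c, h1.trans hST, h2⟩

lemma hasWZSS_three_iff (S : Multiset G) : HasWZSS S 3 ↔ Good S := by
  constructor
  · rintro ⟨t₁, t₂, hle, hcard, hsum⟩
    rw [Multiset.card_add] at hcard
    have h1 : Multiset.card t₁ ≤ 3 := by omega
    interval_cases h : Multiset.card t₁
    · have h2 : Multiset.card t₂ = 3 := by omega
      obtain ⟨a, b, c, rfl⟩ := Multiset.card_eq_three.mp h2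
      rw [Multiset.card_eq_zero] at h
      subst h
      refine ⟨a, b, c, by simpa using hle, Or.inl ?_⟩
      simp at hsum; rw [add_assoc, ← hsum]
    · have h2 : Multiset.card t₂ = 2 := by omega
      obtain ⟨a, rfl⟩ := Multiset.card_eq_one.mp h
      obtain ⟨b, c, rfl⟩ := Multiset.card_eq_two.mp h2
      refine ⟨a, b, c, le_trans (le_of_eq rfl) hle, Or.inr (Or.inr (Or.inl ?_))⟩
      simpa using hsum.symm
    · have h2 : Multiset.card t₂ = 1 := by omega
      obtain ⟨a, b, rfl⟩ := Multiset.card_eq_two.mp h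
      obtain ⟨c, rfl⟩ := Multiset.card_eq_one.mp h2
      refine ⟨a, b, c, le_trans (le_of_eq rfl) hle, Or.inr (Or.inl ?_)⟩
      simpa using hsum
    · have h2 : Multiset.card t₂ = 0 := by omega
      obtain ⟨a, b, c, rfl⟩ := Multiset.card_eq_three.mp h
      rw [Multiset.card_eq_zero] at h2
      subst h2
      refine ⟨a, b, c, by simpa using hle, Or.inl ?_⟩
      simp at hsum; rw [add_assoc, hsum]
  · rintro ⟨a, b, c, hle, hP⟩
    rcases hP with h | h | h | h
    · exact ⟨{a,b,c}, 0, by simpa using hle, by simp, by simp [add_assoc] at h ⊢; exact h⟩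
    · exact ⟨{a,b}, {c}, hle, by simp, by simpa using h⟩
    · exact ⟨{a}, {b,c}, hle, by simp, by simpa using h.symm⟩
    · refine ⟨{c,a}, {b}, le_trans (le_of_eq ?_) hle, by simp, by simpa using h⟩
      rw [Multiset.ext]
      intro x
      simp [Multiset.insert_eq_cons, Multiset.count_cons, Multiset.count_singleton]
      ring

lemma le_cons_cases {t s : Multiset G} {x : G} (h : t ≤ x ::ₘ s) :
    t ≤ s ∨ (x ∈ t ∧ t.erase x ≤ s) := by
  by_cases hx : x ∈ t
  · right
    refine ⟨hx, ?_⟩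
    have := Multiset.erase_le_erase x h
    rwa [Multiset.erase_cons_head] at this
  · left
    rw [Multiset.le_iff_count]
    intro a
    have hc := Multiset.le_iff_count.mp h a
    rcases eq_or_ne a x with rfl | hax
    · simp [Multiset.count_eq_zero_of_notMem hx]
    · rwa [Multiset.count_cons_of_ne hax] at hc

lemma triple_le_cons {x a b c : G} {s : Multiset G} (h : ({a,b,c} : Multiset G) ≤ x ::ₘ s) :
    ({a,b,c} : Multiset G) ≤ s ∨ (a = x ∧ ({b,c} : Multiset G) ≤ s) ∨
      (b = x ∧ ({a,c} : Multiset G) ≤ s) ∨ (c = x ∧ ({a,b} : Multiset G) ≤ s) := by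
  rcases le_cons_cases h with h' | ⟨hm, he⟩
  · exact Or.inl h'
  · rcases eq_or_ne a x with rfl | hax
    · right; left
      refine ⟨rfl, ?_⟩
      rwa [show ({a,b,c} : Multiset G) = a ::ₘ {b,c} from rfl, Multiset.erase_cons_head] at he
    · rcases eq_or_ne b x with rfl | hbx
      · right; right; left
        refine ⟨rfl, ?_⟩
        rwa [show ({a,b,c} : Multiset G) = a ::ₘ b ::ₘ {c} from rfl,
          Multiset.erase_cons_tail _ hax, Multiset.erase_cons_head] at he
      · rcases eq_or_ne c x with rfl | hcx
        · right; right; right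
          refine ⟨rfl, ?_⟩
          rw [show ({a,b,c} : Multiset G) = a ::ₘ b ::ₘ {c} from rfl,
            Multiset.erase_cons_tail _ hax, Multiset.erase_cons_tail _ hbx,
            Multiset.erase_singleton] at he
          exact he
        · exfalso
          simp [Multiset.insert_eq_cons] at hm
          tauto

lemma pair_le_cons {x a b : G} {s : Multiset G} (h : ({a,b} : Multiset G) ≤ x ::ₘ s) :
    ({a,b} : Multiset G) ≤ s ∨ (a = x ∧ b ∈ s) ∨ (b = x ∧ a ∈ s) := by
  rcases le_cons_cases h with h' | ⟨hm, he⟩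
  · exact Or.inl h'
  · rcases eq_or_ne a x with rfl | hax
    · right; left
      refine ⟨rfl, ?_⟩
      rw [show ({a,b} : Multiset G) = a ::ₘ {b} from rfl, Multiset.erase_cons_head] at he
      exact Multiset.singleton_le.mp he
    · rcases eq_or_ne b x with rfl | hbx
      · right; right
        refine ⟨rfl, ?_⟩
        rw [show ({a,b} : Multiset G) = a ::ₘ {b} from rfl,
          Multiset.erase_cons_tail _ hax, Multiset.erase_singleton] at he
        have : ({a} : Multiset G) ≤ s := by simpa using he
        exact Multiset.singleton_le.mp this
      · exfalso
        simp [Multiset.insert_eq_cons] at hm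
        tauto

lemma good_flip {x : G} {s : Multiset G} (h : Good ((-x) ::ₘ s)) : Good (x ::ₘ s) := by
  obtain ⟨a, b, c, hle, hP⟩ := h
  rcases triple_le_cons hle with h' | ⟨rfl, hp⟩ | ⟨rfl, hp⟩ | ⟨rfl, hp⟩
  · exact good_mono (Multiset.le_cons_self _ _) ⟨a, b, c, h', hP⟩
  · exact ⟨x, b, c, Multiset.cons_le_cons _ hp, P3_neg_left hP⟩
  · exact ⟨x, a, c, Multiset.cons_le_cons _ hp, P3_neg_left (P3_swap12 hP)⟩
  · exact ⟨x, a, b, Multiset.cons_le_cons _ hp, P3_neg_left (P3_swap12 (P3_swap23 hP))⟩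

lemma pair_le {a b : G} {s : Multiset G} (h : a ≠ b) (ha : a ∈ s) (hb : b ∈ s) :
    ({a, b} : Multiset G) ≤ s := by
  rw [Multiset.le_iff_count]
  intro x
  rcases eq_or_ne x a with rfl | hxa
  · have h1 : Multiset.count x ({x, b} : Multiset G) = 1 := by
      simp [Multiset.insert_eq_cons, Multiset.count_cons, Multiset.count_singleton, h]
    rw [h1]; exact Multiset.one_le_count_iff_mem.mpr ha
  · rcases eq_or_ne x b with rfl | hxb
    · have h1 : Multiset.count x ({a, x} : Multiset G) = 1 := by
        simp [Multiset.insert_eq_cons, Multiset.count_cons, Multiset.count_singleton, hxa]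
      rw [h1]; exact Multiset.one_le_count_iff_mem.mpr hb
    · have h1 : Multiset.count x ({a, b} : Multiset G) = 0 := by
        simp [Multiset.insert_eq_cons, Multiset.count_cons, Multiset.count_singleton, hxa, hxb]
      rw [show ({a,b} : Multiset G) = a ::ₘ {b} from rfl] at h1
      simp [h1]

lemma triple_le {a b c : G} {s : Multiset G} (hab : a ≠ b) (hac : a ≠ c) (hbc : b ≠ c)
    (ha : a ∈ s) (hb : b ∈ s) (hc : c ∈ s) : ({a, b, c} : Multiset G) ≤ s := by
  rw [Multiset.le_iff_count]
  intro x
  have hcnt : Multiset.count x ({a, b, c} : Multiset G) =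
      ((if x = a then 1 else 0) + if x = b then 1 else 0) + if x = c then 1 else 0 := by
    simp [Multiset.insert_eq_cons, Multiset.count_cons, Multiset.count_singleton]
    ring
  rw [hcnt]
  rcases eq_or_ne x a with rfl | hxa
  · simp [hab, hac]; exact Multiset.one_le_count_iff_mem.mpr ha
  · rcases eq_or_ne x b with rfl | hxb
    · simp [hxa, hbc]; exact Multiset.one_le_count_iff_mem.mpr hb
    · rcases eq_or_ne x c with rfl | hxc
      · simp [hxa, hxb]; exact Multiset.one_le_count_iff_mem.mpr hc
      · simp [hxa, hxb, hxc]

lemma pair_count_le {a : G} {s : Multiset G} (h : 2 ≤ Multiset.count a s) :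
    ({a, a} : Multiset G) ≤ s := by
  rw [Multiset.le_iff_count]
  intro x
  rcases eq_or_ne x a with rfl | hxa
  · simpa [Multiset.insert_eq_cons, Multiset.count_cons, Multiset.count_singleton] using h
  · simp [Multiset.insert_eq_cons, Multiset.count_cons, Multiset.count_singleton, hxa]

lemma triple_count_le {a : G} {s : Multiset G} (h : 3 ≤ Multiset.count a s) :
    ({a, a, a} : Multiset G) ≤ s := by
  rw [Multiset.le_iff_count]
  intro x
  rcases eq_or_ne x a with rfl | hxa
  · simpa [Multiset.insert_eq_cons, Multiset.count_cons, Multiset.count_singleton] using h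
  · simp [Multiset.insert_eq_cons, Multiset.count_cons, Multiset.count_singleton, hxa]

lemma pair_one_le {a b : G} {s : Multiset G} (h : 2 ≤ Multiset.count a s) (hb : b ∈ s)
    (hba : b ≠ a) : ({a, a, b} : Multiset G) ≤ s := by
  rw [Multiset.le_iff_count]
  intro x
  have hcnt : Multiset.count x ({a, a, b} : Multiset G) =
      ((if x = a then 1 else 0) + if x = a then 1 else 0) + if x = b then 1 else 0 := by
    simp [Multiset.insert_eq_cons, Multiset.count_cons, Multiset.count_singleton]
    ring
  rw [hcnt]
  rcases eq_or_ne x a with rfl | hxa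
  · simpa [hba.symm] using h
  · rcases eq_or_ne x b with rfl | hxb
    · simp [hxa]; exact Multiset.one_le_count_iff_mem.mpr hb
    · simp [hxa, hxb]

variable (h3 : ∀ x : G, x + x + x = 0)

lemma pair_same_not_le {x : G} {s : Multiset G} (hs : s.Nodup) :
    ¬ ({x, x} : Multiset G) ≤ s := by
  intro h
  have := Multiset.le_iff_count.mp h x
  have h1 : Multiset.count x ({x, x} : Multiset G) = 2 := by
    simp [Multiset.insert_eq_cons, Multiset.count_cons, Multiset.count_singleton]
  rw [h1] at this
  have := Multiset.nodup_iff_count_le_one.mp hs x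
  omega

lemma pair_mem_left {u v : G} {s : Multiset G} (h : ({u, v} : Multiset G) ≤ s) : u ∈ s :=
  Multiset.mem_of_le h (by simp)

lemma pair_mem_right {u v : G} {s : Multiset G} (h : ({u, v} : Multiset G) ≤ s) : v ∈ s :=
  Multiset.mem_of_le h (by simp)

include h3 in
lemma P3_diag {a q : G} (h : P3 a a q) : q = a ∨ q = -a ∨ q = 0 := by
  rcases h with h | h | h | h
  · left; linear_combination (norm := abel_nf) h - h3 a
  · right; left; linear_combination (norm := abel_nf) h3 a - h
  · right; right; linear_combination (norm := abel_nf) h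
  · right; right; linear_combination (norm := abel_nf) h

include h3 in
lemma ne_neg_self {b : G} (hb : b ≠ 0) : b ≠ -b := by
  intro h
  apply hb
  have h2 : b + b = 0 := by linear_combination (norm := abel_nf) h
  linear_combination (norm := abel_nf) h3 b - h2

include h3 in
lemma neg_not_mem {s : Multiset G} (h0 : (0:G) ∉ s)
    (hG : ¬ Good ((0:G) ::ₘ (0:G) ::ₘ s)) : ∀ b ∈ s, -b ∉ s := by
  intro b hb hnb
  have hb0 : b ≠ 0 := fun h => h0 (h ▸ hb)
  have hbne : b ≠ -b := ne_neg_self h3 hb0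
  apply hG
  refine ⟨0, b, -b, ?_, Or.inl (by abel)⟩
  have hp : ({b, -b} : Multiset G) ≤ s := pair_le hbne hb hnb
  calc ({(0:G), b, -b} : Multiset G) = (0:G) ::ₘ {b, -b} := rfl
    _ ≤ (0:G) ::ₘ (0:G) ::ₘ s :=
      Multiset.cons_le_cons _ (hp.trans (Multiset.le_cons_self _ _))

include h3 in
lemma exceptional {s : Multiset G} (hs : s.Nodup) (h0 : (0:G) ∉ s)
    (hG : ¬ Good ((0:G) ::ₘ (0:G) ::ₘ s)) {b₁ b₂ : G} (hb₁ : b₁ ∈ s) (hb₂ : b₂ ∈ s)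
    (hne : b₁ ≠ b₂) : ¬ Good ((-b₁) ::ₘ (-b₂) ::ₘ s) := by
  have hcons : s ≤ (0:G) ::ₘ (0:G) ::ₘ s :=
    (Multiset.le_cons_self _ _).trans (Multiset.le_cons_self _ _)
  have hGs : ¬ Good s := fun h => hG (good_mono hcons h)
  have hneg : ∀ b ∈ s, -b ∉ s := neg_not_mem h3 h0 hG
  have hdiag : ∀ i q : G, ({i, q} : Multiset G) ≤ s → P3 i i q → False := by
    intro i q hpq hP
    have hi : i ∈ s := pair_mem_left hpq
    have hq : q ∈ s := pair_mem_right hpq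
    rcases P3_diag h3 hP with rfl | rfl | rfl
    · exact pair_same_not_le hs hpq
    · exact hneg i hi hq
    · exact h0 hq
  have helperA : ∀ i ∈ s, ∀ u v : G, ({u, v} : Multiset G) ≤ s → P3 i u v → False := by
    intro i hi u v hpq hP
    have hu : u ∈ s := pair_mem_left hpq
    have hv : v ∈ s := pair_mem_right hpq
    rcases eq_or_ne u i with rfl | hui
    · exact hdiag u v hpq hP
    · rcases eq_or_ne v i with rfl | hvi
      · refine hdiag v u ?_ (P3_swap23 hP)
        rwa [Multiset.pair_comm]
      · have huv : u ≠ v := by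
          rintro rfl
          exact pair_same_not_le hs hpq
        exact hGs ⟨i, u, v, triple_le (Ne.symm hui) (Ne.symm hvi) huv hi hu hv, hP⟩
  have helperB : ∀ i j : G, i ∈ s → j ∈ s → i ≠ j → ∀ c ∈ s, P3 i j c → False := by
    intro i j hi hj hij c hc hP
    rcases eq_or_ne c i with rfl | hci
    · exact hdiag c j (pair_le hij hi hj) (P3_swap23 hP)
    · rcases eq_or_ne c j with rfl | hcj
      · exact hdiag c i (pair_le (Ne.symm hij) hj hi) (P3_swap23 (P3_swap12 hP))
      · exact hGs ⟨i, j, c, triple_le hij (Ne.symm hci) (Ne.symm hcj) hi hj hc, hP⟩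
  have helperC : ∀ i j : G, i ∈ s → j ∈ s → i ≠ j → ∀ u v : G,
      ({u, v} : Multiset G) ≤ (-j) ::ₘ s → P3 i u v → False := by
    intro i j hi hj hij u v hpq hP
    rcases pair_le_cons hpq with h' | ⟨rfl, hv⟩ | ⟨rfl, hu⟩
    · exact helperA i hi u v h' hP
    · exact helperB i j hi hj hij v hv (P3_neg_mid hP)
    · exact helperB i j hi hj hij u hu (P3_neg_mid (P3_swap23 hP))
  rintro ⟨a, b, c, hle, hP⟩
  rcases triple_le_cons hle with h1 | ⟨rfl, hp⟩ | ⟨rfl, hp⟩ | ⟨rfl, hp⟩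
  · rcases triple_le_cons h1 with h2 | ⟨rfl, hp⟩ | ⟨rfl, hp⟩ | ⟨rfl, hp⟩
    · exact hGs ⟨a, b, c, h2, hP⟩
    · exact helperA b₂ hb₂ b c hp (P3_neg_left hP)
    · exact helperA b₂ hb₂ a c hp (P3_neg_left (P3_swap12 hP))
    · exact helperA b₂ hb₂ a b hp (P3_neg_left (P3_swap12 (P3_swap23 hP)))
  · exact helperC b₁ b₂ hb₁ hb₂ hne b c hp (P3_neg_left hP)
  · exact helperC b₁ b₂ hb₁ hb₂ hne a c hp (P3_neg_left (P3_swap12 hP))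
  · exact helperC b₁ b₂ hb₁ hb₂ hne a b hp (P3_neg_left (P3_swap12 (P3_swap23 hP)))

include h3 in
lemma key : ∀ (m : ℕ) (S : Multiset G),
    Multiset.card S - S.toFinset.card ≤ m → ¬ Good S → 4 ≤ Multiset.card S →
    ∃ T : Multiset G, T.Nodup ∧ Multiset.card T = Multiset.card S ∧ ¬ Good T := by
  intro m
  induction m with
  | zero =>
    intro S hm hG _
    refine ⟨S, ?_, rfl, hG⟩
    have h1 : Multiset.card S ≤ S.toFinset.card := by omega
    have h2 : S.toFinset.card = Multiset.card S.dedup := rfl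
    have h3' : S.dedup = S :=
      Multiset.eq_of_le_of_card_le (Multiset.dedup_le S) (by omega)
    rw [← h3']
    exact Multiset.nodup_dedup S
  | succ m ih =>
    intro S hm hG hcard
    by_cases hnd : S.Nodup
    · exact ⟨S, hnd, rfl, hG⟩
    · -- there is a duplicated element
      have hdup : ∃ a : G, 2 ≤ Multiset.count a S := by
        by_contra h
        push_neg at h
        exact hnd (Multiset.nodup_iff_count_le_one.mpr fun a => by have := h a; omega)
      by_cases hex : ∃ b : G, b ≠ 0 ∧ 2 ≤ Multiset.count b S
      · -- a nonzero duplicated element: flip one copy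
        obtain ⟨b, hb0, hb2⟩ := hex
        obtain ⟨s, hs⟩ : ∃ s, S = b ::ₘ b ::ₘ s := by
          obtain ⟨k, hk⟩ := Multiset.le_iff_exists_add.mp (pair_count_le hb2)
          exact ⟨k, by rw [hk]; simp [Multiset.insert_eq_cons, Multiset.cons_add, Multiset.singleton_add]⟩
        have hbs : b ∉ s := by
          intro hmem
          apply hG
          refine ⟨b, b, b, ?_, Or.inl (h3 b)⟩
          rw [hs]
          exact Multiset.cons_le_cons _ (Multiset.cons_le_cons _
            (Multiset.singleton_le.mpr hmem))
        have hnbb : -b ≠ b := (ne_neg_self h3 hb0).symm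
        have hnbs : -b ∉ s := by
          intro hmem
          apply hG
          refine ⟨b, b, -b, ?_, Or.inr (Or.inl ?_)⟩
          · rw [hs]
            exact Multiset.cons_le_cons _ (Multiset.cons_le_cons _
              (Multiset.singleton_le.mpr hmem))
          · have := h3 b
            linear_combination (norm := abel_nf) this
        set S' : Multiset G := (-b) ::ₘ b ::ₘ s with hS'
        have hG' : ¬ Good S' := by
          intro h
          apply hG
          rw [hs]
          exact good_flip h
        have hcard' : Multiset.card S' = Multiset.card S := by simp [hS', hs]
        have htf : S'.toFinset.card = S.toFinset.card + 1 := by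
          have e1 : S.toFinset = insert b s.toFinset := by
            rw [hs]; simp [Multiset.toFinset_cons]
          have e2 : S'.toFinset = insert (-b) (insert b s.toFinset) := by
            rw [hS']; simp [Multiset.toFinset_cons]
          rw [e1, e2, Finset.card_insert_of_notMem]
          simp only [Finset.mem_insert, Multiset.mem_toFinset]
          push_neg
          exact ⟨hnbb, hnbs⟩
        obtain ⟨T, h1, h2, h4⟩ := ih S' (by omega) hG' (by omega)
        exact ⟨T, h1, by omega, h4⟩
      · -- only 0 is duplicated
        push_neg at hex
        obtain ⟨a, ha⟩ := hdup
        have ha0 : a = 0 := by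
          by_contra h
          have := hex a h
          omega
        subst ha0
        obtain ⟨s, hs⟩ : ∃ s, S = (0:G) ::ₘ (0:G) ::ₘ s := by
          obtain ⟨k, hk⟩ := Multiset.le_iff_exists_add.mp (pair_count_le ha)
          exact ⟨k, by rw [hk]; simp [Multiset.insert_eq_cons, Multiset.cons_add, Multiset.singleton_add]⟩
        have h0s : (0:G) ∉ s := by
          intro hmem
          apply hG
          refine ⟨0, 0, 0, ?_, Or.inl (by simp)⟩
          rw [hs]
          exact Multiset.cons_le_cons _ (Multiset.cons_le_cons _
            (Multiset.singleton_le.mpr hmem))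
        have hsle : s ≤ S := by
          rw [hs]
          exact (Multiset.le_cons_self _ _).trans (Multiset.le_cons_self _ _)
        have hsnd : s.Nodup := by
          rw [Multiset.nodup_iff_count_le_one]
          intro x
          rcases eq_or_ne x 0 with rfl | hx0
          · simp [Multiset.count_eq_zero_of_notMem h0s]
          · have h1 := hex x hx0
            have h2 : Multiset.count x s ≤ Multiset.count x S :=
              Multiset.le_iff_count.mp hsle x
            omega
        have hGc : ¬ Good ((0:G) ::ₘ (0:G) ::ₘ s) := by rwa [hs] at hG
        have hscard : 2 ≤ Multiset.card s := by
          have : Multiset.card S = Multiset.card s + 2 := by simp [hs]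
          omega
        obtain ⟨b₁, hb₁, b₂, hb₂, hbne⟩ : ∃ b₁ ∈ s, ∃ b₂ ∈ s, b₁ ≠ b₂ := by
          have h1 : s.toFinset.card = Multiset.card s := by
            rw [Multiset.toFinset_card_of_nodup hsnd]
          have h2 : 1 < s.toFinset.card := by omega
          obtain ⟨x, hx, y, hy, hxy⟩ := Finset.one_lt_card.mp h2
          exact ⟨x, Multiset.mem_toFinset.mp hx, y, Multiset.mem_toFinset.mp hy, hxy⟩
        have hneg := neg_not_mem h3 h0s hGc
        refine ⟨(-b₁) ::ₘ (-b₂) ::ₘ s, ?_, ?_, exceptional h3 hsnd h0s hGc hb₁ hb₂ hbne⟩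
        · rw [Multiset.nodup_cons, Multiset.nodup_cons]
          refine ⟨?_, ?_, hsnd⟩
          · rw [Multiset.mem_cons]
            push_neg
            exact ⟨fun h => hbne (neg_injective h), hneg b₁ hb₁⟩
          · exact hneg b₂ hb₂
        · simp [hs]

lemma exp3 (r : ℕ) (hr : 1 ≤ r) : AddMonoid.exponent (Fin r → ZMod 3) = 3 := by
  have hx : addOrderOf (fun _ => 1 : Fin r → ZMod 3) = 3 := by
    apply addOrderOf_eq_prime
    · funext i; show (3:ℕ) • (1 : ZMod 3) = 0; decide
    · intro h
      have := congrFun h ⟨0, by omega⟩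
      simp at this
  apply Nat.dvd_antisymm
  · exact AddMonoid.exponent_dvd_of_forall_nsmul_eq_zero (fun g => by
      funext i; show (3:ℕ) • (g i) = 0; generalize g i = a; revert a; decide)
  · have := AddMonoid.addOrder_dvd_exponent (fun _ => 1 : Fin r → ZMod 3)
    rwa [hx] at this

lemma pigeon [Fintype G] {S : Multiset G} (h : 2 * Fintype.card G + 1 ≤ Multiset.card S) :
    ∃ a : G, 3 ≤ Multiset.count a S := by
  by_contra h'
  push_neg at h'
  have h1 := Multiset.toFinset_sum_count_eq S
  have h2 : ∑ a ∈ S.toFinset, Multiset.count a S ≤ S.toFinset.card * 2 := by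
    have := Finset.sum_le_card_nsmul S.toFinset (fun a => Multiset.count a S) 2
      (fun x _ => by show Multiset.count x S ≤ 2; have := h' x; omega)
    simpa [smul_eq_mul] using this
  have h4 : S.toFinset.card ≤ Fintype.card G := Finset.card_le_univ _
  omega

end WZSSAux

open WZSSAux in
/-- Proposition 3: for every `r ≥ 2`, `s_A(C_3^r) = g_A(C_3^r)`. -/
theorem sA_eq_gA (r : ℕ) (hr : 2 ≤ r) :
    sA (Fin r → ZMod 3) = gA (Fin r → ZMod 3) := by
  set G := (Fin r → ZMod 3) with hGdef
  have h3 : ∀ x : G, x + x + x = 0 := fun x => by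
    funext i
    have : ∀ a : ZMod 3, a + a + a = 0 := by decide
    exact this (x i)
  have hexp : AddMonoid.exponent G = 3 := exp3 r (by omega)
  unfold sA gA
  rw [hexp]
  set Ps : Set ℕ := {ℓ : ℕ | ∀ S : Multiset G, ℓ ≤ Multiset.card S → HasWZSS S 3} with hPs
  set Pg : Set ℕ := {ℓ : ℕ | ∀ S : Multiset G, ℓ ≤ Multiset.card S → S.Nodup → HasWZSS S 3}
    with hPg
  have hPsmem : (2 * Fintype.card G + 1) ∈ Ps := by
    intro S hS
    obtain ⟨a, ha⟩ := pigeon hS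
    exact (hasWZSS_three_iff S).mpr ⟨a, a, a, triple_count_le ha, Or.inl (h3 a)⟩
  have hsub : Ps ⊆ Pg := fun ℓ h S hc _ => h S hc
  -- the counterexample of size 3
  let i0 : Fin r := ⟨0, by omega⟩
  let i1 : Fin r := ⟨1, by omega⟩
  set e1 : G := (fun i => if i = i0 then 1 else 0) with he1
  set e2 : G := (fun i => if i = i1 then 1 else 0) with he2
  have hi01 : i0 ≠ i1 := by
    simp [i0, i1, Fin.ext_iff]
  have he1i0 : e1 i0 = 1 := by simp [he1]
  have he1i1 : e1 i1 = 0 := by simp [he1, Ne.symm hi01]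
  have he2i0 : e2 i0 = 0 := by simp [he2, hi01]
  have he2i1 : e2 i1 = 1 := by simp [he2]
  have hne01 : (0:G) ≠ e1 := fun h => by
    have h' : (0 : ZMod 3) = e1 i0 := congrFun h i0
    rw [he1i0] at h'
    exact absurd h' (by decide)
  have hne02 : (0:G) ≠ e2 := fun h => by
    have h' : (0 : ZMod 3) = e2 i1 := congrFun h i1
    rw [he2i1] at h'
    exact absurd h' (by decide)
  have hne12 : e1 ≠ e2 := fun h => by
    have h' : e1 i0 = e2 i0 := congrFun h i0
    rw [he1i0, he2i0] at h'
    exact absurd h' (by decide)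
  have hP0 : ¬ P3 (0:G) e1 e2 := by
    rintro (h | h | h | h)
    · have h' : (0 : ZMod 3) + e1 i0 + e2 i0 = 0 := congrFun h i0
      rw [he1i0, he2i0] at h'
      exact absurd h' (by decide)
    · have h' : (0 : ZMod 3) + e1 i0 = e2 i0 := congrFun h i0
      rw [he1i0, he2i0] at h'
      exact absurd h' (by decide)
    · have h' : e1 i0 + e2 i0 = (0 : ZMod 3) := congrFun h i0
      rw [he1i0, he2i0] at h'
      exact absurd h' (by decide)
    · have h' : e2 i0 + (0 : ZMod 3) = e1 i0 := congrFun h i0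
      rw [he1i0, he2i0] at h'
      exact absurd h' (by decide)
  have pair_eq_cases : ∀ a b x y : G, ({a,b} : Multiset G) = {x,y} →
      (a = x ∧ b = y) ∨ (a = y ∧ b = x) := by
    intro a b x y h
    rw [show ({a,b} : Multiset G) = a ::ₘ {b} from rfl,
      show ({x,y} : Multiset G) = x ::ₘ {y} from rfl, Multiset.cons_eq_cons] at h
    rcases h with ⟨rfl, h⟩ | ⟨hax, cs, h1, h2⟩
    · left; exact ⟨rfl, by simpa using h⟩
    · right
      have hcs : cs = 0 := by
        have := congrArg Multiset.card h1
        simp at this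
        exact this
      subst hcs
      simp only [Multiset.cons_zero] at h1 h2
      have hb : b = x := by simpa using h1
      have ha : y = a := by simpa using h2
      exact ⟨ha.symm, hb⟩
  set D0 : Multiset G := {0, e1, e2} with hD0
  have hD0nd : D0.Nodup := by
    rw [hD0]
    refine Multiset.nodup_cons.mpr ⟨?_, Multiset.nodup_cons.mpr ⟨?_, ?_⟩⟩
    · simp only [Multiset.insert_eq_cons, Multiset.mem_cons, Multiset.mem_singleton]
      push_neg
      exact ⟨hne01, hne02⟩
    · simpa using hne12
    · simp
  have hD0card : Multiset.card D0 = 3 := by simp [hD0]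
  have hD0G : ¬ Good D0 := by
    rintro ⟨a, b, c, hle, hP⟩
    rw [hD0] at hle
    have hP0' : ∀ u v : G, ({u, v} : Multiset G) = {e1, e2} → P3 (0:G) u v → False := by
      intro u v huv hp
      rcases pair_eq_cases u v e1 e2 huv with ⟨rfl, rfl⟩ | ⟨rfl, rfl⟩
      · exact hP0 hp
      · exact hP0 (P3_swap23 hp)
    rcases triple_le_cons hle with h1 | ⟨rfl, hp⟩ | ⟨rfl, hp⟩ | ⟨rfl, hp⟩
    · have := Multiset.card_le_card h1
      simp at this
    · exact hP0' b c (Multiset.eq_of_le_of_card_le hp (by simp)) hP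
    · exact hP0' a c (Multiset.eq_of_le_of_card_le hp (by simp)) (P3_swap12 hP)
    · exact hP0' a b (Multiset.eq_of_le_of_card_le hp (by simp))
        (P3_swap12 (P3_swap23 hP))
  have hPgne : Pg.Nonempty := ⟨_, hsub hPsmem⟩
  have hgmem : sInf Pg ∈ Pg := Nat.sInf_mem hPgne
  have h4 : 4 ≤ sInf Pg := by
    apply le_csInf hPgne
    intro m hm
    by_contra hlt
    push_neg at hlt
    have hm3 : m ≤ Multiset.card D0 := by omega
    exact hD0G ((hasWZSS_three_iff D0).mp (hm D0 hm3 hD0nd))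
  apply le_antisymm
  · apply Nat.sInf_le
    intro S hc
    by_contra hW
    have hG : ¬ Good S := fun g => hW ((hasWZSS_three_iff S).mpr g)
    obtain ⟨T, hTnd, hTc, hTG⟩ :=
      key h3 (Multiset.card S) S (by omega) hG (le_trans h4 hc)
    exact hTG ((hasWZSS_three_iff T).mp (hgmem T (by omega) hTnd))
  · exact Nat.sInf_le (hsub (Nat.sInf_mem ⟨_, hPsmem⟩))
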